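/- For α > -1/2 and y > 0, the function K_y^α(x) = ∫_0^x t^{1/2} J_α(ty) dt satisfies |K_y^α(x)| ≤ C_α y^{-3/2} uniformly in x > 0, for a constant C_α depending only on α. -/

import Mathlib

open MeasureTheory Set Filter
open scoped ENNReal NNReal

/-- The Bessel function of the first kind of order `α`, defined by its power series
`J_α(x) = Σ_{k≥0} (-1)^k / (k! Γ(k+α+1)) (x/2)^{α+2k}` (for `x > 0`). -/
noncomputable def besselJ (α : ℝ) (x : ℝ) : ℝ :=
  ∑' k : ℕ, ((-1 : ℝ) ^ k / ((Nat.factorial k : ℝ) * Real.Gamma ((k : ℝ) + α + 1))) *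
    (x / 2) ^ (α + 2 * (k : ℝ))

namespace BesselAux

/-- coefficient -/
noncomputable def bc (ν : ℝ) (k : ℕ) : ℝ :=
  ((-1 : ℝ) ^ k / ((Nat.factorial k : ℝ) * Real.Gamma ((k : ℝ) + ν + 1)))

noncomputable def bterm (ν : ℝ) (k : ℕ) (s : ℝ) : ℝ := bc ν k * (s / 2) ^ (ν + 2 * (k : ℝ))

noncomputable def dterm (ν : ℝ) (k : ℕ) (s : ℝ) : ℝ :=
  bc ν k * ((ν + 2 * k) / 2 * (s / 2) ^ (ν + 2 * (k : ℝ) - 1))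

lemma besselJ_eq (ν x : ℝ) : besselJ ν x = ∑' k, bterm ν k x := rfl

lemma gamma_pos (ν : ℝ) (hν : -(1/2 : ℝ) ≤ ν) (k : ℕ) : 0 < Real.Gamma ((k : ℝ) + ν + 1) := by
  apply Real.Gamma_pos_of_pos
  have : (0:ℝ) ≤ k := Nat.cast_nonneg k
  nlinarith

lemma abs_bc (ν : ℝ) (hν : -(1/2 : ℝ) ≤ ν) (k : ℕ) :
    |bc ν k| = 1 / ((Nat.factorial k : ℝ) * Real.Gamma ((k : ℝ) + ν + 1)) := by
  have h1 : (0:ℝ) < (Nat.factorial k : ℝ) := by positivity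
  have h2 := gamma_pos ν hν k
  rw [bc, abs_div, abs_pow, abs_neg, abs_one, one_pow, abs_of_pos (by positivity)]

/-- master summability: dominating series -/
lemma summable_master (ν : ℝ) (hν : -(1/2 : ℝ) ≤ ν) (r : ℝ) (hr : 0 < r) :
    Summable (fun k : ℕ => ((abs ν) + 2 * k + 1) * r ^ k /
      ((Nat.factorial k : ℝ) * Real.Gamma ((k : ℝ) + ν + 1))) := by
  apply summable_of_ratio_norm_eventually_le (r := 1/2) (by norm_num : (1:ℝ)/2 < 1)
  have h : ∀ᶠ k : ℕ in atTop, (4 * r ≤ (k:ℝ) + 1/2) ∧ ((1:ℝ) ≤ k) := by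
    filter_upwards [eventually_ge_atTop (⌈4*r⌉₊ + 1)] with k hk
    have h1 : (4:ℝ) * r ≤ ⌈4*r⌉₊ + 1 := by
      have := Nat.le_ceil (4*r); linarith
    have hk' : ((⌈4*r⌉₊ + 1 : ℕ) : ℝ) ≤ (k:ℝ) := by exact_mod_cast hk
    push_cast at hk'
    refine ⟨by linarith, ?_⟩
    have : (1:ℕ) ≤ k := le_trans (Nat.le_add_left 1 _) hk
    exact_mod_cast this
  filter_upwards [h] with k ⟨hk, hk1⟩
  have hg := gamma_pos ν hν k
  have hfac : (0:ℝ) < (Nat.factorial k : ℝ) := by positivity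
  have hkν : (0:ℝ) < (k:ℝ) + ν + 1 := by nlinarith [(Nat.cast_nonneg k : (0:ℝ) ≤ (k:ℝ))]
  have hrec : Real.Gamma ((k:ℝ) + 1 + ν + 1) = ((k:ℝ) + ν + 1) * Real.Gamma ((k:ℝ) + ν + 1) := by
    rw [show (k:ℝ) + 1 + ν + 1 = ((k:ℝ) + ν + 1) + 1 by ring, Real.Gamma_add_one hkν.ne']
  have hfs : ((Nat.factorial (k+1) : ℕ) : ℝ) = ((k:ℝ)+1) * (Nat.factorial k : ℝ) := by
    rw [Nat.factorial_succ]; push_cast; ring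
  have hA : (0:ℝ) < (abs ν) + 2*(k:ℝ) + 1 := by positivity
  have hA' : (0:ℝ) < (abs ν) + 2*((k:ℝ)+1) + 1 := by positivity
  have habs : (0:ℝ) ≤ |ν| := abs_nonneg ν
  have hrk : (0:ℝ) < r ^ k := pow_pos hr k
  have hrk1 : (0:ℝ) < r ^ (k+1) := pow_pos hr (k+1)
  have hk1' : (0:ℝ) < (k:ℝ) + 1 := by linarith
  have hden : (0:ℝ) < ((k:ℝ)+1) * (Nat.factorial k : ℝ) * (((k:ℝ)+ν+1) * Real.Gamma ((k:ℝ)+ν+1)) :=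
    mul_pos (mul_pos hk1' hfac) (mul_pos hkν hg)
  have hden2 : (0:ℝ) < (Nat.factorial k : ℝ) * Real.Gamma ((k:ℝ)+ν+1) := mul_pos hfac hg
  rw [Real.norm_eq_abs, Real.norm_eq_abs]
  push_cast
  rw [hrec, hfs]
  rw [abs_of_pos (div_pos (mul_pos hA' hrk1) hden), abs_of_pos (div_pos (mul_pos hA hrk) hden2)]
  rw [show (1:ℝ)/2 * (((abs ν) + 2*(k:ℝ) + 1) * r ^ k / ((Nat.factorial k : ℝ) * Real.Gamma ((k:ℝ)+ν+1)))
      = ((abs ν) + 2*(k:ℝ) + 1) * r ^ k / (2 * ((Nat.factorial k : ℝ) * Real.Gamma ((k:ℝ)+ν+1))) by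
    field_simp]
  rw [div_le_div_iff₀ hden (by linarith)]
  have e1 : ((abs ν) + 2*((k:ℝ)+1) + 1) ≤ 3 * ((abs ν) + 2*(k:ℝ) + 1) := by linarith
  have e2 : r ^ (k+1) = r ^ k * r := by ring
  have f1 : 4*r ≤ (k:ℝ)+ν+1 := by linarith
  have f2 : (2:ℝ) ≤ (k:ℝ)+1 := by linarith
  have f3 : 8*r ≤ ((k:ℝ)+1)*((k:ℝ)+ν+1) := by nlinarith
  rw [e2]
  nlinarith [mul_le_mul_of_nonneg_right e1 (by positivity : (0:ℝ) ≤ r^k * r * (2 * ((Nat.factorial k:ℝ) * Real.Gamma ((k:ℝ)+ν+1)))),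
    mul_le_mul_of_nonneg_left f3 (le_of_lt (mul_pos (mul_pos hA hrk) hden2)),
    mul_pos (mul_pos (mul_pos hA hrk) hr) hden2]

lemma rpow_interval_bound {a b s : ℝ} (ha : 0 < a) (h1 : a ≤ s) (h2 : s ≤ b) (p : ℝ) :
    s ^ p ≤ max (a ^ p) (b ^ p) := by
  rcases le_or_gt 0 p with hp | hp
  · exact le_max_of_le_right (Real.rpow_le_rpow (by linarith) h2 hp)
  · exact le_max_of_le_left (Real.rpow_le_rpow_of_nonpos ha h1 hp.le)

lemma rpow_split {x : ℝ} (hx : 0 < x) (q : ℝ) (k : ℕ) :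
    x ^ (q + 2*(k:ℝ)) = x ^ q * (x^2)^k := by
  rw [Real.rpow_add hx, show (2*(k:ℝ)) = ((2*k : ℕ):ℝ) by push_cast; ring,
    Real.rpow_natCast, pow_mul]

lemma norm_bterm_le (ν : ℝ) (hν : -(1/2 : ℝ) ≤ ν) (k : ℕ) {a b s : ℝ}
    (ha : 0 < a) (h1 : a ≤ s) (h2 : s ≤ b) :
    ‖bterm ν k s‖ ≤ max ((a/2) ^ ν) ((b/2) ^ ν) *
      (((abs ν) + 2 * k + 1) * ((b/2)^2) ^ k /
        ((Nat.factorial k : ℝ) * Real.Gamma ((k : ℝ) + ν + 1))) := by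
  have hg := gamma_pos ν hν k
  have hfac : (0:ℝ) < (Nat.factorial k : ℝ) := by positivity
  have hs : 0 < s := lt_of_lt_of_le ha h1
  rw [bterm, norm_mul, Real.norm_eq_abs, Real.norm_eq_abs, abs_bc ν hν k,
    abs_of_pos (Real.rpow_pos_of_pos (by linarith) _), rpow_split (by linarith : (0:ℝ) < s/2)]
  have e1 : (s/2) ^ ν ≤ max ((a/2) ^ ν) ((b/2) ^ ν) :=
    rpow_interval_bound (by linarith) (by linarith) (by linarith) ν
  have e2 : ((s/2)^2) ^ k ≤ ((b/2)^2) ^ k := by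
    apply pow_le_pow_left₀ (by positivity)
    nlinarith
  have e3 : (1:ℝ) ≤ (abs ν) + 2*k + 1 := by nlinarith [abs_nonneg ν, (Nat.cast_nonneg k : (0:ℝ) ≤ (k:ℝ))]
  have hb2 : (0:ℝ) ≤ ((b/2)^2)^k := by positivity
  have hmax : (0:ℝ) < max ((a/2) ^ ν) ((b/2) ^ ν) :=
    lt_max_of_lt_left (Real.rpow_pos_of_pos (by linarith) _)
  calc 1 / ((Nat.factorial k : ℝ) * Real.Gamma ((k : ℝ) + ν + 1)) * ((s/2) ^ ν * ((s/2)^2)^k)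
      ≤ 1 / ((Nat.factorial k : ℝ) * Real.Gamma ((k : ℝ) + ν + 1)) *
        (max ((a/2) ^ ν) ((b/2) ^ ν) * ((b/2)^2)^k) := by
        apply mul_le_mul_of_nonneg_left _ (by positivity)
        apply mul_le_mul e1 e2 (by positivity) hmax.le
    _ ≤ max ((a/2) ^ ν) ((b/2) ^ ν) *
        (((abs ν) + 2 * k + 1) * ((b/2)^2) ^ k /
        ((Nat.factorial k : ℝ) * Real.Gamma ((k : ℝ) + ν + 1))) := by
        rw [div_mul_eq_mul_div, one_mul, mul_div_assoc]
        apply mul_le_mul_of_nonneg_left _ hmax.le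
        apply div_le_div_of_nonneg_right _ (by positivity)
        nlinarith
  
lemma norm_dterm_le (ν : ℝ) (hν : -(1/2 : ℝ) ≤ ν) (k : ℕ) {a b s : ℝ}
    (ha : 0 < a) (h1 : a ≤ s) (h2 : s ≤ b) :
    ‖dterm ν k s‖ ≤ max ((a/2) ^ (ν-1)) ((b/2) ^ (ν-1)) *
      (((abs ν) + 2 * k + 1) * ((b/2)^2) ^ k /
        ((Nat.factorial k : ℝ) * Real.Gamma ((k : ℝ) + ν + 1))) := by
  have hg := gamma_pos ν hν k
  have hfac : (0:ℝ) < (Nat.factorial k : ℝ) := by positivity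
  have hs : 0 < s := lt_of_lt_of_le ha h1
  have hrw : ν + 2*(k:ℝ) - 1 = (ν - 1) + 2*(k:ℝ) := by ring
  rw [dterm, norm_mul, Real.norm_eq_abs, Real.norm_eq_abs, abs_bc ν hν k, abs_mul,
    abs_of_pos (Real.rpow_pos_of_pos (by linarith : (0:ℝ) < s/2) _), hrw,
    rpow_split (by linarith : (0:ℝ) < s/2)]
  have e1 : (s/2) ^ (ν-1) ≤ max ((a/2) ^ (ν-1)) ((b/2) ^ (ν-1)) :=
    rpow_interval_bound (by linarith) (by linarith) (by linarith) (ν-1)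
  have e2 : ((s/2)^2) ^ k ≤ ((b/2)^2) ^ k := by
    apply pow_le_pow_left₀ (by positivity); nlinarith
  have e3 : |(ν + 2*(k:ℝ))/2| ≤ (abs ν) + 2*k + 1 := by
    rw [abs_div]
    have : |ν + 2*(k:ℝ)| ≤ |ν| + 2*k := by
      refine (abs_add_le _ _).trans ?_
      simp [abs_of_nonneg (by positivity : (0:ℝ) ≤ 2*(k:ℝ))]
    rw [abs_of_pos (by norm_num : (0:ℝ) < 2)]
    nlinarith [abs_nonneg ν]
  have hmax : (0:ℝ) < max ((a/2) ^ (ν-1)) ((b/2) ^ (ν-1)) :=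
    lt_max_of_lt_left (Real.rpow_pos_of_pos (by linarith) _)
  calc 1 / ((Nat.factorial k : ℝ) * Real.Gamma ((k : ℝ) + ν + 1)) *
        (|(ν + 2*(k:ℝ))/2| * ((s/2) ^ (ν-1) * ((s/2)^2)^k))
      ≤ 1 / ((Nat.factorial k : ℝ) * Real.Gamma ((k : ℝ) + ν + 1)) *
        (((abs ν) + 2*k + 1) * (max ((a/2) ^ (ν-1)) ((b/2) ^ (ν-1)) * ((b/2)^2)^k)) := by
        apply mul_le_mul_of_nonneg_left _ (by positivity)
        apply mul_le_mul e3 (mul_le_mul e1 e2 (by positivity) hmax.le)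
          (by positivity) (by positivity)
    _ = max ((a/2) ^ (ν-1)) ((b/2) ^ (ν-1)) *
        (((abs ν) + 2 * k + 1) * ((b/2)^2) ^ k /
        ((Nat.factorial k : ℝ) * Real.Gamma ((k : ℝ) + ν + 1))) := by
        field_simp

lemma hasDerivAt_bterm (ν : ℝ) (k : ℕ) {s : ℝ} (hs : 0 < s) :
    HasDerivAt (fun z => bterm ν k z) (dterm ν k s) s := by
  have h2 : HasDerivAt (fun z : ℝ => z / 2) (1/2) s := (hasDerivAt_id s).div_const 2
  have h1 : HasDerivAt (fun x : ℝ => x ^ (ν + 2*(k:ℝ)))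
      ((ν + 2*(k:ℝ)) * (s/2) ^ (ν + 2*(k:ℝ) - 1)) (s/2) :=
    Real.hasDerivAt_rpow_const (Or.inl (by positivity))
  have := (h1.comp s h2).const_mul (bc ν k)
  refine this.congr_deriv ?_
  rw [dterm]; ring

lemma summable_bterm (ν : ℝ) (hν : -(1/2 : ℝ) ≤ ν) {s : ℝ} (hs : 0 < s) :
    Summable (fun k => bterm ν k s) := by
  apply Summable.of_norm
  apply Summable.of_nonneg_of_le (fun k => norm_nonneg _)
    (fun k => norm_bterm_le ν hν k hs le_rfl le_rfl)
  exact ((summable_master ν hν ((s/2)^2) (by positivity)).mul_left _)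

lemma hasDerivAt_besselJ (ν : ℝ) (hν : -(1/2 : ℝ) ≤ ν) {s : ℝ} (hs : 0 < s) :
    HasDerivAt (besselJ ν) (∑' k, dterm ν k s) s := by
  have key : HasDerivAt (fun z => ∑' k, bterm ν k z) (∑' k, dterm ν k s) s := by
    apply hasDerivAt_tsum_of_isPreconnected
      (((summable_master ν hν (((2*s)/2)^2) (by positivity)).mul_left
        (max ((s/2/2) ^ (ν-1)) (((2*s)/2) ^ (ν-1))))) (isOpen_Ioo (a := s/2) (b := 2*s))
      (isPreconnected_Ioo) (fun k y hy => hasDerivAt_bterm ν k (by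
        rcases hy with ⟨hy1, _⟩; linarith))
      (fun k y hy => ?_) (by constructor <;> linarith) (summable_bterm ν hν hs)
      (by constructor <;> linarith)
    rcases hy with ⟨hy1, hy2⟩
    exact norm_dterm_le ν hν k (by linarith : (0:ℝ) < s/2) (by linarith) (by linarith)
  have : besselJ ν = fun z => ∑' k, bterm ν k z := by
    funext z; exact besselJ_eq ν z
  rw [this]
  exact key

lemma summable_dterm (ν : ℝ) (hν : -(1/2 : ℝ) ≤ ν) {s : ℝ} (hs : 0 < s) :
    Summable (fun k => dterm ν k s) := by
  apply Summable.of_norm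
  apply Summable.of_nonneg_of_le (fun k => norm_nonneg _)
    (fun k => norm_dterm_le ν hν k hs le_rfl le_rfl)
  exact ((summable_master ν hν ((s/2)^2) (by positivity)).mul_left _)

lemma bc_succ (ν : ℝ) (hν : -(1/2 : ℝ) ≤ ν) (k : ℕ) :
    bc ν k = ((k:ℝ) + ν + 1) * bc (ν+1) k := by
  have hkν : (0:ℝ) < (k:ℝ) + ν + 1 := by nlinarith [(Nat.cast_nonneg k : (0:ℝ) ≤ (k:ℝ))]
  have hrec : Real.Gamma ((k:ℝ) + (ν+1) + 1) = ((k:ℝ) + ν + 1) * Real.Gamma ((k:ℝ) + ν + 1) := by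
    rw [show (k:ℝ) + (ν+1) + 1 = ((k:ℝ) + ν + 1) + 1 by ring, Real.Gamma_add_one hkν.ne']
  have hg := gamma_pos ν hν k
  have hfac : (0:ℝ) < (Nat.factorial k : ℝ) := by positivity
  rw [bc, bc, hrec]
  field_simp

lemma dterm_succ_eq (ν : ℝ) (hν : -(1/2 : ℝ) ≤ ν) (k : ℕ) {s : ℝ} (hs : 0 < s) :
    dterm (ν+1) k s = bterm ν k s - ((ν+1)/s) * bterm (ν+1) k s := by
  have h2 : (0:ℝ) < s/2 := by linarith
  have hsplit : (s/2) ^ ((ν+1) + 2*(k:ℝ)) = (s/2) ^ (ν + 2*(k:ℝ)) * (s/2) := by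
    rw [show (ν+1) + 2*(k:ℝ) = (ν + 2*(k:ℝ)) + 1 by ring, Real.rpow_add_one h2.ne']
  have hd : (ν+1) + 2*(k:ℝ) - 1 = ν + 2*(k:ℝ) := by ring
  rw [dterm, bterm, bterm, hd, hsplit, bc_succ ν hν k]
  field_simp
  ring

lemma besselJ_deriv_raise (ν : ℝ) (hν : -(1/2 : ℝ) ≤ ν) {s : ℝ} (hs : 0 < s) :
    HasDerivAt (besselJ (ν+1)) (besselJ ν s - ((ν+1)/s) * besselJ (ν+1) s) s := by
  have h := hasDerivAt_besselJ (ν+1) (by linarith) hs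
  have e : ∑' k, dterm (ν+1) k s = besselJ ν s - ((ν+1)/s) * besselJ (ν+1) s := by
    rw [tsum_congr (fun k => dterm_succ_eq ν hν k hs),
      Summable.tsum_sub (summable_bterm ν hν hs) (((summable_bterm (ν+1) (by linarith) hs).mul_left _)),
      tsum_mul_left, besselJ_eq, besselJ_eq]
  rwa [e] at h

lemma besselJ_deriv_lower (ν : ℝ) (hν : -(1/2 : ℝ) ≤ ν) {s : ℝ} (hs : 0 < s) :
    HasDerivAt (besselJ ν) ((ν/s) * besselJ ν s - besselJ (ν+1) s) s := by
  have h := hasDerivAt_besselJ ν hν hs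
  have h2 : (0:ℝ) < s/2 := by linarith
  set g : ℕ → ℝ := fun k => dterm ν k s - (ν/s) * bterm ν k s with hg
  have hgsum : Summable g :=
    (summable_dterm ν hν hs).sub ((summable_bterm ν hν hs).mul_left _)
  have hg0 : g 0 = 0 := by
    simp only [hg, dterm, bterm]
    push_cast
    rw [show ν + 2*(0:ℝ) - 1 = (ν + 2*0) - 1 by ring]
    rw [show (s/2) ^ (ν + 2*(0:ℝ)) = (s/2) ^ (ν + 2*(0:ℝ) - 1) * (s/2) by
      rw [← Real.rpow_add_one h2.ne']; ring_nf]
    field_simp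
    ring
  have hgsucc : ∀ j : ℕ, g (j+1) = -bterm (ν+1) j s := by
    intro j
    have hb : bc ν (j+1) * ((j:ℝ)+1) = -bc (ν+1) j := by
      have hfac : ((Nat.factorial (j+1) : ℕ) : ℝ) = ((j:ℝ)+1) * (Nat.factorial j : ℝ) := by
        rw [Nat.factorial_succ]; push_cast; ring
      have hfj : (0:ℝ) < (Nat.factorial j : ℝ) := by positivity
      have hj1 : (0:ℝ) < (j:ℝ)+1 := by positivity
      have hgam : Real.Gamma (((j:ℕ)+1:ℕ) + ν + 1) = Real.Gamma ((j:ℝ) + (ν+1) + 1) := by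
        push_cast; ring_nf
      have hgp := gamma_pos (ν+1) (by linarith) j
      rw [bc, bc, hfac, hgam]
      rw [show ((-1:ℝ)) ^ (j+1) = -(-1:ℝ)^j by ring]
      field_simp
    have hexp : ν + 2*(((j:ℕ)+1:ℕ):ℝ) - 1 = (ν+1) + 2*(j:ℝ) := by push_cast; ring
    have hsplit : (s/2) ^ (ν + 2*(((j:ℕ)+1:ℕ):ℝ)) = (s/2) ^ (ν + 2*(((j:ℕ)+1:ℕ):ℝ) - 1) * (s/2) := by
      rw [← Real.rpow_add_one h2.ne']; ring_nf
    simp only [hg, dterm, bterm]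
    rw [hsplit, hexp]
    have : (ν/s) * (bc ν (j+1) * ((s/2) ^ ((ν+1) + 2*(j:ℝ)) * (s/2)))
        = bc ν (j+1) * (ν/2 * (s/2) ^ ((ν+1) + 2*(j:ℝ))) := by
      field_simp
    rw [this]
    have hc : ν + 2*(((j:ℕ)+1:ℕ):ℝ) = ν + 2*(j:ℝ) + 2 := by push_cast; ring
    rw [hc]
    calc bc ν (j+1) * ((ν + 2*(j:ℝ) + 2)/2 * (s/2) ^ ((ν+1) + 2*(j:ℝ)))
          - bc ν (j+1) * (ν/2 * (s/2) ^ ((ν+1) + 2*(j:ℝ)))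
        = (bc ν (j+1) * ((j:ℝ)+1)) * (s/2) ^ ((ν+1) + 2*(j:ℝ)) := by ring
      _ = -(bc (ν+1) j * (s/2) ^ ((ν+1) + 2*(j:ℝ))) := by rw [hb]; ring
  have key : ∑' k, g k = -besselJ (ν+1) s := by
    rw [Summable.tsum_eq_zero_add hgsum, hg0, zero_add, tsum_congr hgsucc, tsum_neg, besselJ_eq]
  have e : ∑' k, dterm ν k s = (ν/s) * besselJ ν s - besselJ (ν+1) s := by
    have := Summable.tsum_sub (summable_dterm ν hν hs) ((summable_bterm ν hν hs).mul_left (ν/s))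
    have e2 : ∑' k, (dterm ν k s - (ν/s) * bterm ν k s) = ∑' k, g k := rfl
    rw [e2, key, tsum_mul_left, ← besselJ_eq] at this
    linarith [this]
  rwa [e] at h

noncomputable def uu (ν : ℝ) (s : ℝ) : ℝ := s ^ (1/2 : ℝ) * besselJ ν s

noncomputable def vv (ν : ℝ) (s : ℝ) : ℝ := ((ν + 1/2)/s) * uu ν s - uu (ν+1) s

lemma hasDerivAt_sqrt {s : ℝ} (hs : 0 < s) :
    HasDerivAt (fun z : ℝ => z ^ (1/2 : ℝ)) ((1/2) * s ^ (1/2 : ℝ) / s) s := by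
  have h := Real.hasDerivAt_rpow_const (x := s) (p := 1/2) (Or.inl hs.ne')
  convert h using 1
  rw [show (1/2 : ℝ) - 1 = (1/2 : ℝ) + (-1) by ring, Real.rpow_add hs, Real.rpow_neg_one]
  field_simp

lemma hasDerivAt_uu (ν : ℝ) (hν : -(1/2 : ℝ) ≤ ν) {s : ℝ} (hs : 0 < s) :
    HasDerivAt (uu ν) (vv ν s) s := by
  have h := (hasDerivAt_sqrt hs).mul (besselJ_deriv_lower ν hν hs)
  refine h.congr_deriv ?_
  rw [vv, uu, uu]
  field_simp
  ring

lemma hasDerivAt_uu_succ (ν : ℝ) (hν : -(1/2 : ℝ) ≤ ν) {s : ℝ} (hs : 0 < s) :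
    HasDerivAt (uu (ν+1)) (uu ν s - ((ν + 1/2)/s) * uu (ν+1) s) s := by
  have h := (hasDerivAt_sqrt hs).mul (besselJ_deriv_raise ν hν hs)
  refine h.congr_deriv ?_
  rw [uu, uu]
  field_simp
  ring

lemma hasDerivAt_vv (ν : ℝ) (hν : -(1/2 : ℝ) ≤ ν) {s : ℝ} (hs : 0 < s) :
    HasDerivAt (vv ν) (((ν^2 - 1/4)/s^2 - 1) * uu ν s) s := by
  have hdiv : HasDerivAt (fun z : ℝ => (ν + 1/2)/z) (-(ν + 1/2)/s^2) s := by
    simp only [div_eq_mul_inv]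
    have h := ((hasDerivAt_id s).inv hs.ne').const_mul (ν + 1/2)
    refine h.congr_deriv ?_
    simp
    ring
  have h := (hdiv.mul (hasDerivAt_uu ν hν hs)).sub (hasDerivAt_uu_succ ν hν hs)
  have huv : uu (ν+1) s = ((ν + 1/2)/s) * uu ν s - vv ν s := by rw [vv]; ring
  refine h.congr_deriv ?_
  rw [vv, huv]
  field_simp
  ring

noncomputable def EE (ν : ℝ) (s : ℝ) : ℝ := (uu ν s)^2 + (vv ν s)^2

lemma hasDerivAt_EE (ν : ℝ) (hν : -(1/2 : ℝ) ≤ ν) {s : ℝ} (hs : 0 < s) :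
    HasDerivAt (EE ν) (2*(ν^2 - 1/4)/s^2 * (uu ν s * vv ν s)) s := by
  have h := ((hasDerivAt_uu ν hν hs).pow 2).add ((hasDerivAt_vv ν hν hs).pow 2)
  refine h.congr_deriv ?_
  field_simp
  ring

noncomputable def GG (ν : ℝ) (s : ℝ) : ℝ := EE ν s * Real.exp (|ν^2 - 1/4| / s)

lemma hasDerivAt_GG (ν : ℝ) (hν : -(1/2 : ℝ) ≤ ν) {s : ℝ} (hs : 0 < s) :
    HasDerivAt (GG ν) ((2*(ν^2 - 1/4)/s^2 * (uu ν s * vv ν s)) * Real.exp (|ν^2 - 1/4| / s)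
      + EE ν s * (Real.exp (|ν^2 - 1/4| / s) * (-|ν^2 - 1/4|/s^2))) s := by
  have hdiv : HasDerivAt (fun z : ℝ => |ν^2 - 1/4| / z) (-|ν^2 - 1/4|/s^2) s := by
    simp only [div_eq_mul_inv]
    have h := ((hasDerivAt_id s).inv hs.ne').const_mul (|ν^2 - 1/4|)
    refine h.congr_deriv ?_
    simp
    ring
  exact (hasDerivAt_EE ν hν hs).mul (hdiv.exp)

lemma GG_deriv_nonpos (ν : ℝ) (hν : -(1/2 : ℝ) ≤ ν) {s : ℝ} (hs : 0 < s) :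
    deriv (GG ν) s ≤ 0 := by
  rw [(hasDerivAt_GG ν hν hs).deriv]
  have hexp : (0:ℝ) < Real.exp (|ν^2 - 1/4| / s) := Real.exp_pos _
  have hs2 : (0:ℝ) < s^2 := by positivity
  have key : 2*(ν^2 - 1/4) * (uu ν s * vv ν s) ≤ |ν^2 - 1/4| * EE ν s := by
    rw [EE]
    nlinarith [sq_nonneg (uu ν s - vv ν s), sq_nonneg (uu ν s + vv ν s),
      le_abs_self (ν^2 - 1/4), neg_abs_le (ν^2 - 1/4), abs_nonneg (ν^2 - 1/4)]
  have e1 : (2*(ν^2 - 1/4)/s^2 * (uu ν s * vv ν s)) * Real.exp (|ν^2 - 1/4| / s)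
      + EE ν s * (Real.exp (|ν^2 - 1/4| / s) * (-|ν^2 - 1/4|/s^2))
      = (2*(ν^2 - 1/4) * (uu ν s * vv ν s) - |ν^2 - 1/4| * EE ν s)
        * (Real.exp (|ν^2 - 1/4| / s) / s^2) := by field_simp; ring
  rw [e1]
  apply mul_nonpos_of_nonpos_of_nonneg (by linarith) (by positivity)

lemma EE_bound (ν : ℝ) (hν : -(1/2 : ℝ) ≤ ν) {s : ℝ} (hs : 1 ≤ s) :
    EE ν s ≤ EE ν 1 * Real.exp (|ν^2 - 1/4|) := by
  have hcont : ContinuousOn (GG ν) (Ici 1) := by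
    intro x hx
    exact ((hasDerivAt_GG ν hν (lt_of_lt_of_le one_pos hx)).continuousAt).continuousWithinAt
  have hanti : AntitoneOn (GG ν) (Ici 1) := by
    apply antitoneOn_of_deriv_nonpos (convex_Ici 1) hcont
    · intro x hx
      rw [interior_Ici] at hx
      exact ((hasDerivAt_GG ν hν (lt_trans one_pos hx)).differentiableAt).differentiableWithinAt
    · intro x hx
      rw [interior_Ici] at hx
      exact GG_deriv_nonpos ν hν (lt_trans one_pos hx)
  have h1 : GG ν s ≤ GG ν 1 := hanti (mem_Ici.mpr le_rfl) (mem_Ici.mpr hs) hs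
  have hE : (0:ℝ) ≤ EE ν s := by rw [EE]; positivity
  have hexp1 : (1:ℝ) ≤ Real.exp (|ν^2 - 1/4| / s) := by
    apply Real.one_le_exp; positivity
  calc EE ν s ≤ EE ν s * Real.exp (|ν^2 - 1/4| / s) := le_mul_of_one_le_right hE hexp1
    _ ≤ GG ν 1 := h1
    _ = EE ν 1 * Real.exp (|ν^2 - 1/4|) := by rw [GG, div_one]

lemma uu_bounded (ν : ℝ) (hν : -(1/2 : ℝ) ≤ ν) :
    ∃ M : ℝ, 0 < M ∧ ∀ s : ℝ, 1 ≤ s → |uu ν s| ≤ M ∧ |uu (ν+1) s| ≤ M := by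
  set B := EE ν 1 * Real.exp (|ν^2 - 1/4|) + 1 with hB
  have hB0 : 0 < B := by
    have h1 : (0:ℝ) ≤ EE ν 1 := by rw [EE]; positivity
    have h2 : (0:ℝ) ≤ EE ν 1 * Real.exp (|ν^2 - 1/4|) := mul_nonneg h1 (Real.exp_pos _).le
    rw [hB]; linarith
  refine ⟨(|ν + 1/2| + 1) * Real.sqrt B + Real.sqrt B, by positivity, fun s hs => ?_⟩
  have hs0 : (0:ℝ) < s := lt_of_lt_of_le one_pos hs
  have hEs : EE ν s ≤ B := by
    have := EE_bound ν hν hs; rw [hB]; linarith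
  have hu2 : (uu ν s)^2 ≤ B := by rw [EE] at hEs; nlinarith [sq_nonneg (vv ν s)]
  have hv2 : (vv ν s)^2 ≤ B := by rw [EE] at hEs; nlinarith [sq_nonneg (uu ν s)]
  have hu : |uu ν s| ≤ Real.sqrt B := by
    rw [← Real.sqrt_sq_eq_abs]; exact Real.sqrt_le_sqrt hu2
  have hv : |vv ν s| ≤ Real.sqrt B := by
    rw [← Real.sqrt_sq_eq_abs]; exact Real.sqrt_le_sqrt hv2
  have hsqB : (0:ℝ) ≤ Real.sqrt B := Real.sqrt_nonneg B
  constructor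
  · calc |uu ν s| ≤ Real.sqrt B := hu
      _ ≤ (|ν + 1/2| + 1) * Real.sqrt B + Real.sqrt B := by nlinarith [abs_nonneg (ν + 1/2)]
  · have : uu (ν+1) s = ((ν + 1/2)/s) * uu ν s - vv ν s := by rw [vv]; ring
    rw [this]
    calc |((ν + 1/2)/s) * uu ν s - vv ν s| ≤ |((ν + 1/2)/s) * uu ν s| + |vv ν s| :=
        abs_sub _ _
      _ = (|ν + 1/2|/s) * |uu ν s| + |vv ν s| := by
          rw [abs_mul, abs_div, abs_of_pos hs0]
      _ ≤ (|ν + 1/2|/1) * Real.sqrt B + Real.sqrt B := by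
          have h1 : |ν + 1/2|/s ≤ |ν + 1/2|/1 := by
            apply div_le_div_of_nonneg_left (abs_nonneg _) one_pos hs
          have h2 := abs_nonneg (uu ν s)
          have h3 : (0:ℝ) ≤ |ν + 1/2|/s := by positivity
          gcongr
      _ ≤ (|ν + 1/2| + 1) * Real.sqrt B + Real.sqrt B := by
          rw [div_one]; nlinarith

/-- sum of the dominating series at r = 1/4 -/
noncomputable def S1 (ν : ℝ) : ℝ :=
  ∑' k : ℕ, ((abs ν) + 2 * k + 1) * (1/4 : ℝ) ^ k /
    ((Nat.factorial k : ℝ) * Real.Gamma ((k : ℝ) + ν + 1))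

lemma S1_nonneg (ν : ℝ) (hν : -(1/2 : ℝ) ≤ ν) : 0 ≤ S1 ν := by
  apply tsum_nonneg
  intro k
  have := gamma_pos ν hν k
  positivity

lemma uu_small (ν : ℝ) (hν : -(1/2 : ℝ) ≤ ν) {s : ℝ} (h0 : 0 < s) (h1 : s ≤ 1) :
    ‖uu ν s‖ ≤ ((1/2 : ℝ) ^ ν * S1 ν) * s ^ (ν + 1/2) := by
  have hb : |besselJ ν s| ≤ (s/2) ^ ν * S1 ν := by
    have hsum1 : Summable (fun k => ‖bterm ν k s‖) := by
      apply Summable.of_nonneg_of_le (fun k => norm_nonneg _)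
        (fun k => norm_bterm_le ν hν k h0 le_rfl le_rfl)
      exact ((summable_master ν hν ((s/2)^2) (by positivity)).mul_left _)
    have hsum2 : Summable (fun k : ℕ => (s/2) ^ ν * (((abs ν) + 2 * k + 1) * (1/4 : ℝ) ^ k /
        ((Nat.factorial k : ℝ) * Real.Gamma ((k : ℝ) + ν + 1)))) :=
      (summable_master ν hν (1/4) (by norm_num)).mul_left _
    calc |besselJ ν s| = ‖∑' k, bterm ν k s‖ := by rw [besselJ_eq]; rfl
      _ ≤ ∑' k, ‖bterm ν k s‖ := norm_tsum_le_tsum_norm hsum1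
      _ ≤ ∑' k : ℕ, (s/2) ^ ν * (((abs ν) + 2 * k + 1) * (1/4 : ℝ) ^ k /
          ((Nat.factorial k : ℝ) * Real.Gamma ((k : ℝ) + ν + 1))) := by
          apply Summable.tsum_le_tsum _ hsum1 hsum2
          intro k
          have hg := gamma_pos ν hν k
          have hfac : (0:ℝ) < (Nat.factorial k : ℝ) := by positivity
          rw [bterm, norm_mul, Real.norm_eq_abs, Real.norm_eq_abs, abs_bc ν hν k,
            abs_of_pos (Real.rpow_pos_of_pos (by linarith) _),
            rpow_split (by linarith : (0:ℝ) < s/2)]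
          have e2 : ((s/2)^2) ^ k ≤ (1/4 : ℝ) ^ k := by
            apply pow_le_pow_left₀ (by positivity); nlinarith
          have e3 : (1:ℝ) ≤ (abs ν) + 2*k + 1 := by
            nlinarith [abs_nonneg ν, (Nat.cast_nonneg k : (0:ℝ) ≤ (k:ℝ))]
          have hsp : (0:ℝ) < (s/2) ^ ν := Real.rpow_pos_of_pos (by linarith) ν
          have hd : (0:ℝ) < (Nat.factorial k : ℝ) * Real.Gamma ((k:ℝ) + ν + 1) := by positivity
          rw [show (1:ℝ) / ((Nat.factorial k : ℝ) * Real.Gamma ((k:ℝ) + ν + 1)) *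
              ((s/2) ^ ν * ((s/2)^2)^k)
              = (s/2) ^ ν * ((s/2)^2)^k / ((Nat.factorial k : ℝ) * Real.Gamma ((k:ℝ) + ν + 1))
              by ring,
            show (s/2) ^ ν * (((abs ν) + 2 * (k:ℝ) + 1) * (1/4 : ℝ) ^ k /
              ((Nat.factorial k : ℝ) * Real.Gamma ((k:ℝ) + ν + 1)))
              = (s/2) ^ ν * (((abs ν) + 2 * (k:ℝ) + 1) * (1/4 : ℝ) ^ k) /
              ((Nat.factorial k : ℝ) * Real.Gamma ((k:ℝ) + ν + 1)) by ring]
          rw [div_le_div_iff_of_pos_right hd]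
          apply mul_le_mul_of_nonneg_left _ hsp.le
          calc ((s/2)^2)^k ≤ (1/4:ℝ)^k := e2
            _ ≤ ((abs ν) + 2*(k:ℝ) + 1) * (1/4:ℝ)^k :=
                le_mul_of_one_le_left (by positivity) e3

      _ = (s/2) ^ ν * S1 ν := by rw [tsum_mul_left]; rfl
  have hS := S1_nonneg ν hν
  have e1 : (s/2 : ℝ) ^ ν = s ^ ν * (1/2 : ℝ) ^ ν := by
    rw [show (s/2 : ℝ) = s * (1/2) by ring, Real.mul_rpow h0.le (by norm_num)]
  have e2 : s ^ (1/2 : ℝ) * s ^ ν = s ^ (ν + 1/2) := by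
    rw [Real.rpow_add h0]; ring
  have hsq : (0:ℝ) < s ^ (1/2 : ℝ) := Real.rpow_pos_of_pos h0 _
  calc ‖uu ν s‖ = s ^ (1/2 : ℝ) * |besselJ ν s| := by
        rw [uu, norm_mul, Real.norm_eq_abs, Real.norm_eq_abs, abs_of_pos hsq]
    _ ≤ s ^ (1/2 : ℝ) * ((s/2) ^ ν * S1 ν) := mul_le_mul_of_nonneg_left hb hsq.le
    _ = ((1/2 : ℝ) ^ ν * S1 ν) * s ^ (ν + 1/2) := by rw [e1, ← e2]; ring

lemma continuousAt_uu (ν : ℝ) (hν : -(1/2 : ℝ) ≤ ν) {s : ℝ} (hs : 0 < s) :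
    ContinuousAt (uu ν) s := (hasDerivAt_uu ν hν hs).continuousAt

lemma F_bound (α : ℝ) (hα : -(1/2 : ℝ) < α) :
    ∃ C : ℝ, 0 < C ∧ ∀ X : ℝ, 0 < X → |∫ s in (0:ℝ)..X, uu α s| ≤ C := by
  have hν : -(1/2 : ℝ) ≤ α := hα.le
  obtain ⟨M, hM0, hM⟩ := uu_bounded (α+1) (by linarith)
  set D : ℝ := (1/2 : ℝ) ^ α * S1 α with hD
  have hD0 : 0 ≤ D := mul_nonneg (Real.rpow_pos_of_pos one_half_pos α).le (S1_nonneg α hν)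
  have hexp : (0:ℝ) < α + 3/2 := by linarith
  set C1 : ℝ := D / (α + 3/2) + 1 with hC1
  set C2 : ℝ := 2*M + |α + 1/2| * (2*M + |α + 5/2| * M) with hC2
  have hC10 : 0 < C1 := by
    rw [hC1]; linarith [div_nonneg hD0 hexp.le]
  have hC20 : 0 ≤ C2 := by positivity
  -- integrability of uu α on [0, t] for 0 < t ≤ 1
  have hmeas : ∀ t : ℝ, 0 < t → AEStronglyMeasurable (uu α) (volume.restrict (Set.uIoc (0:ℝ) t)) := by
    intro t ht
    rw [uIoc_of_le ht.le]
    apply ContinuousOn.aestronglyMeasurable _ measurableSet_Ioc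
    intro z hz
    exact (continuousAt_uu α hν hz.1).continuousWithinAt
  have hint_small : ∀ t : ℝ, 0 < t → t ≤ 1 → IntervalIntegrable (uu α) volume 0 t := by
    intro t ht ht1
    apply IntervalIntegrable.mono_fun' (g := fun z => D * z ^ (α + 1/2))
      ((intervalIntegral.intervalIntegrable_rpow' (by linarith)).const_mul D) (hmeas t ht)
    rw [uIoc_of_le ht.le]
    refine (ae_restrict_iff' measurableSet_Ioc).mpr (Filter.Eventually.of_forall ?_)
    intro z hz
    exact uu_small α hν hz.1 (le_trans hz.2 ht1)
  have habs_small : ∀ t : ℝ, 0 < t → t ≤ 1 → |∫ s in (0:ℝ)..t, uu α s| ≤ C1 := by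
    intro t ht ht1
    have h1 : ‖∫ s in (0:ℝ)..t, uu α s‖ ≤ |∫ s in (0:ℝ)..t, D * s ^ (α + 1/2)| := by
      apply intervalIntegral.norm_integral_le_abs_of_norm_le _
        ((intervalIntegral.intervalIntegrable_rpow' (by linarith)).const_mul D)
      rw [uIoc_of_le ht.le]
      refine (ae_restrict_iff' measurableSet_Ioc).mpr (Filter.Eventually.of_forall ?_)
      intro z hz
      exact uu_small α hν hz.1 (le_trans hz.2 ht1)
    have h2 : ∫ s in (0:ℝ)..t, D * s ^ (α + 1/2) = D * (t ^ (α + 3/2) / (α + 3/2)) := by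
      rw [intervalIntegral.integral_const_mul, integral_rpow (Or.inl (by linarith))]
      rw [Real.zero_rpow (by linarith : α + 1/2 + 1 ≠ 0)]
      rw [show α + 1/2 + 1 = α + 3/2 by ring]
      ring
    have h3 : t ^ (α + 3/2) ≤ 1 := Real.rpow_le_one ht.le ht1 hexp.le
    have h4 : 0 ≤ t ^ (α + 3/2) := Real.rpow_nonneg ht.le _
    rw [Real.norm_eq_abs] at h1
    have hnn : (0:ℝ) ≤ D * (t ^ (α + 3/2) / (α + 3/2)) :=
      mul_nonneg hD0 (div_nonneg h4 hexp.le)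
    rw [h2, abs_of_nonneg hnn] at h1
    have h5 : D * (t ^ (α + 3/2) / (α + 3/2)) ≤ D / (α + 3/2) := by
      rw [mul_div_assoc', div_le_div_iff_of_pos_right hexp]
      nlinarith
    rw [hC1]
    linarith
  refine ⟨C1 + C2, by linarith, fun X hX => ?_⟩
  rcases le_or_gt X 1 with hX1 | hX1
  · have := habs_small X hX hX1
    linarith
  · have hX0 : (0:ℝ) < X := hX
    have hmem_pos : ∀ z ∈ uIcc (1:ℝ) X, (0:ℝ) < z := by
      intro z hz
      rw [uIcc_of_le hX1.le] at hz
      linarith [hz.1]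
    -- continuity helpers on [1,X]
    have hcont_uu : ∀ (ν : ℝ), -(1/2:ℝ) ≤ ν → ContinuousOn (uu ν) (uIcc (1:ℝ) X) :=
      fun ν hν' z hz => (continuousAt_uu ν hν' (hmem_pos z hz)).continuousWithinAt
    have hca : IntervalIntegrable (uu α) volume 1 X := (hcont_uu α hν).intervalIntegrable
    have hcb : IntervalIntegrable (fun s => ((α+1/2)/s) * uu (α+1) s) volume 1 X := by
      apply ContinuousOn.intervalIntegrable
      intro z hz
      have hz0 := hmem_pos z hz
      exact ((continuousAt_const.div continuousAt_id hz0.ne').mul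
        (continuousAt_uu (α+1) (by linarith) hz0)).continuousWithinAt
    have hcc : IntervalIntegrable (fun s => uu (α+1) s / s) volume 1 X := by
      apply ContinuousOn.intervalIntegrable
      intro z hz
      have hz0 := hmem_pos z hz
      exact ((continuousAt_uu (α+1) (by linarith) hz0).div continuousAt_id
        hz0.ne').continuousWithinAt
    have hcd : IntervalIntegrable (fun s => ((α+5/2)/s^2) * uu (α+1+1) s) volume 1 X := by
      apply ContinuousOn.intervalIntegrable
      intro z hz
      have hz0 := hmem_pos z hz
      exact ((continuousAt_const.div (continuousAt_id.pow 2) (pow_ne_zero 2 hz0.ne')).mul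
        (continuousAt_uu (α+1+1) (by linarith) hz0)).continuousWithinAt
    -- FTC identities
    have ftc1 : ∫ s in (1:ℝ)..X, (uu α s - ((α+1/2)/s) * uu (α+1) s)
        = uu (α+1) X - uu (α+1) 1 := by
      apply intervalIntegral.integral_eq_sub_of_hasDerivAt
      · intro z hz
        exact hasDerivAt_uu_succ α hν (hmem_pos z hz)
      · exact hca.sub hcb
    have ftc2 : ∫ s in (1:ℝ)..X, (uu (α+1) s / s - ((α+5/2)/s^2) * uu (α+1+1) s)
        = uu (α+1+1) X / X - uu (α+1+1) 1 / 1 := by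
      apply intervalIntegral.integral_eq_sub_of_hasDerivAt
        (f := fun s => uu (α+1+1) s / s)
      · intro z hz
        have hz0 := hmem_pos z hz
        have h := (hasDerivAt_uu_succ (α+1) (by linarith) hz0).div (hasDerivAt_id z) hz0.ne'
        refine h.congr_deriv ?_
        simp only [id_eq]
        field_simp
        ring
      · exact hcc.sub hcd
    -- bound for the doubly-integrated remainder
    have bound3 : |∫ s in (1:ℝ)..X, ((α+5/2)/s^2) * uu (α+1+1) s| ≤ |α+5/2| * M := by
      have hg : IntervalIntegrable (fun s : ℝ => |α+5/2| * M * s ^ (-2:ℝ)) volume 1 X :=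
        (intervalIntegral.intervalIntegrable_rpow
          (Or.inr (Set.notMem_uIcc_of_lt one_pos hX0))).const_mul _
      have h1 : ‖∫ s in (1:ℝ)..X, ((α+5/2)/s^2) * uu (α+1+1) s‖
          ≤ |∫ s in (1:ℝ)..X, |α+5/2| * M * s ^ (-2:ℝ)| := by
        apply intervalIntegral.norm_integral_le_abs_of_norm_le _ hg
        rw [uIoc_of_le hX1.le]
        refine (ae_restrict_iff' measurableSet_Ioc).mpr (Filter.Eventually.of_forall ?_)
        intro z hz
        have hz0 : (0:ℝ) < z := lt_trans one_pos hz.1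
        have hz2 : (0:ℝ) < z^2 := by positivity
        have hrp : z ^ (-2:ℝ) = (z^2)⁻¹ := by
          rw [Real.rpow_neg hz0.le, ← Real.rpow_natCast z 2]
          norm_num
        rw [Real.norm_eq_abs, abs_mul, abs_div, abs_of_pos hz2, hrp]
        calc |α+5/2|/z^2 * |uu (α+1+1) z| ≤ |α+5/2|/z^2 * M :=
            mul_le_mul_of_nonneg_left (hM z hz.1.le).2 (by positivity)
          _ = |α+5/2| * M * (z^2)⁻¹ := by rw [div_eq_mul_inv]; ring
      have hXinv : (0:ℝ) ≤ X ^ (-1:ℝ) := Real.rpow_nonneg hX0.le _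
      have hXinv1 : X ^ (-1:ℝ) ≤ 1 := by
        rw [Real.rpow_neg_one]
        exact inv_le_one_of_one_le₀ hX1.le
      have h2 : ∫ s in (1:ℝ)..X, |α+5/2| * M * s ^ (-2:ℝ)
          = |α+5/2| * M * (1 - X ^ (-1:ℝ)) := by
        rw [intervalIntegral.integral_const_mul,
          integral_rpow (Or.inr ⟨by norm_num, Set.notMem_uIcc_of_lt one_pos hX0⟩)]
        rw [show (-2:ℝ)+1 = -1 by norm_num, Real.one_rpow]
        ring
      rw [Real.norm_eq_abs] at h1
      have hnn2 : (0:ℝ) ≤ |α+5/2| * M * (1 - X ^ (-1:ℝ)) :=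
        mul_nonneg (mul_nonneg (abs_nonneg _) hM0.le) (by linarith)
      rw [h2, abs_of_nonneg hnn2] at h1
      calc |∫ s in (1:ℝ)..X, ((α+5/2)/s^2) * uu (α+1+1) s|
          ≤ |α+5/2| * M * (1 - X ^ (-1:ℝ)) := h1
        _ ≤ |α+5/2| * M := by
            nlinarith [mul_nonneg (mul_nonneg (abs_nonneg (α+5/2)) hM0.le) hXinv]
    -- combine
    have hMX := hM X hX1.le
    have hM1 := hM 1 le_rfl
    have eq2 : ∫ s in (1:ℝ)..X, uu (α+1) s / s
        = (uu (α+1+1) X / X - uu (α+1+1) 1 / 1)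
          + ∫ s in (1:ℝ)..X, ((α+5/2)/s^2) * uu (α+1+1) s := by
      rw [← ftc2, intervalIntegral.integral_sub hcc hcd]
      ring
    have bound2 : |∫ s in (1:ℝ)..X, uu (α+1) s / s| ≤ 2*M + |α+5/2| * M := by
      rw [eq2]
      have e1 : |uu (α+1+1) X / X| ≤ M := by
        rw [abs_div, abs_of_pos hX0, div_le_iff₀ hX0]
        calc |uu (α+1+1) X| ≤ M := hMX.2
          _ ≤ M * X := le_mul_of_one_le_right hM0.le hX1.le
      have e2 : |uu (α+1+1) 1 / 1| ≤ M := by rw [div_one]; exact hM1.2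
      calc |uu (α+1+1) X / X - uu (α+1+1) 1 / 1
            + ∫ s in (1:ℝ)..X, ((α+5/2)/s^2) * uu (α+1+1) s|
          ≤ |uu (α+1+1) X / X - uu (α+1+1) 1 / 1|
            + |∫ s in (1:ℝ)..X, ((α+5/2)/s^2) * uu (α+1+1) s| := abs_add_le _ _
        _ ≤ (|uu (α+1+1) X / X| + |uu (α+1+1) 1 / 1|)
            + |α+5/2| * M := add_le_add (abs_sub _ _) bound3
        _ ≤ 2*M + |α+5/2| * M := by linarith
    have eq1 : ∫ s in (1:ℝ)..X, uu α s
        = (uu (α+1) X - uu (α+1) 1) + ∫ s in (1:ℝ)..X, ((α+1/2)/s) * uu (α+1) s := by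
      rw [← ftc1, intervalIntegral.integral_sub hca hcb]
      ring
    have boundb : |∫ s in (1:ℝ)..X, ((α+1/2)/s) * uu (α+1) s|
        ≤ |α+1/2| * (2*M + |α+5/2| * M) := by
      have e : (fun s : ℝ => ((α+1/2)/s) * uu (α+1) s)
          = fun s : ℝ => (α+1/2) * (uu (α+1) s / s) := by
        funext z; ring
      rw [e, intervalIntegral.integral_const_mul, abs_mul]
      exact mul_le_mul_of_nonneg_left bound2 (abs_nonneg _)
    have bigbound : |∫ s in (1:ℝ)..X, uu α s| ≤ C2 := by
      rw [eq1, hC2]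
      calc |uu (α+1) X - uu (α+1) 1 + ∫ s in (1:ℝ)..X, ((α+1/2)/s) * uu (α+1) s|
          ≤ |uu (α+1) X - uu (α+1) 1|
            + |∫ s in (1:ℝ)..X, ((α+1/2)/s) * uu (α+1) s| := abs_add_le _ _
        _ ≤ (|uu (α+1) X| + |uu (α+1) 1|) + |α+1/2| * (2*M + |α+5/2| * M) :=
            add_le_add (abs_sub _ _) boundb
        _ ≤ 2*M + |α+1/2| * (2*M + |α+5/2| * M) := by linarith [hMX.1, hM1.1]
    have hsplit : (∫ s in (0:ℝ)..1, uu α s) + ∫ s in (1:ℝ)..X, uu α s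
        = ∫ s in (0:ℝ)..X, uu α s :=
      intervalIntegral.integral_add_adjacent_intervals (hint_small 1 one_pos le_rfl) hca
    rw [← hsplit]
    calc |(∫ s in (0:ℝ)..1, uu α s) + ∫ s in (1:ℝ)..X, uu α s|
        ≤ |∫ s in (0:ℝ)..1, uu α s| + |∫ s in (1:ℝ)..X, uu α s| := abs_add_le _ _
      _ ≤ C1 + C2 := add_le_add (habs_small 1 one_pos le_rfl) bigbound

end BesselAux

theorem stmt10 (α : ℝ) (hα : -(1 / 2 : ℝ) < α) :
    ∃ Cα : ℝ, 0 < Cα ∧ ∀ y : ℝ, 0 < y → ∀ x : ℝ, 0 < x →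
      |∫ t in Set.Ioo (0 : ℝ) x, t ^ ((1 : ℝ) / 2) * besselJ α (t * y)| ≤
        Cα * y ^ (-(3 / 2 : ℝ)) := by
  obtain ⟨C, hC0, hC⟩ := BesselAux.F_bound α hα
  refine ⟨C, hC0, fun y hy x hx => ?_⟩
  have hy2 : (0:ℝ) < y ^ ((1:ℝ)/2) := Real.rpow_pos_of_pos hy _
  have e0 : (∫ t in Set.Ioo (0:ℝ) x, t ^ ((1:ℝ)/2) * besselJ α (t*y))
      = ∫ t in (0:ℝ)..x, t ^ ((1:ℝ)/2) * besselJ α (t*y) := by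
    rw [intervalIntegral.integral_of_le hx.le, MeasureTheory.integral_Ioc_eq_integral_Ioo]
  have e1 : (∫ t in (0:ℝ)..x, t ^ ((1:ℝ)/2) * besselJ α (t*y))
      = ∫ t in (0:ℝ)..x, (y ^ ((1:ℝ)/2))⁻¹ * BesselAux.uu α (t*y) := by
    apply intervalIntegral.integral_congr
    intro t ht
    rw [uIcc_of_le hx.le] at ht
    simp only [BesselAux.uu]
    rw [Real.mul_rpow ht.1 hy.le]
    field_simp
  have e2 : (∫ t in (0:ℝ)..x, BesselAux.uu α (t*y))
      = y⁻¹ * ∫ s in (0:ℝ)..(x*y), BesselAux.uu α s := by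
    rw [intervalIntegral.integral_comp_mul_right (fun s => BesselAux.uu α s) hy.ne']
    norm_num [smul_eq_mul]
  have e3 : y ^ (-(3/2 : ℝ)) = (y ^ ((1:ℝ)/2))⁻¹ * y⁻¹ := by
    rw [show (-(3/2 : ℝ)) = (-(1/2)) + (-1) by norm_num, Real.rpow_add hy,
      Real.rpow_neg_one, Real.rpow_neg hy.le]
  rw [e0, e1, intervalIntegral.integral_const_mul, e2]
  rw [abs_mul, abs_mul, abs_of_pos (inv_pos.mpr hy2), abs_of_pos (inv_pos.mpr hy)]
  rw [e3]
  calc (y ^ ((1:ℝ)/2))⁻¹ * (y⁻¹ * |∫ s in (0:ℝ)..(x*y), BesselAux.uu α s|)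
      ≤ (y ^ ((1:ℝ)/2))⁻¹ * (y⁻¹ * C) := by
        apply mul_le_mul_of_nonneg_left _ (inv_pos.mpr hy2).le
        exact mul_le_mul_of_nonneg_left (hC (x*y) (mul_pos hx hy)) (inv_pos.mpr hy).le
    _ = C * ((y ^ ((1:ℝ)/2))⁻¹ * y⁻¹) := by ring
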